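/- With $Y_{tu} = e^{-k(u-t)}$ and $X^{(0)}_u(x) = Y_{tu}x + m(1-Y_{tu})$ for $x, k, m > 0$, define $Z^{(0,1)}_u(x') = -\frac{\mu^2 c}{2\gamma k} \frac{1 - e^{-k(T-u)}}{\sqrt{x'}\,(e^{-k(T-u)}x' + m(1-e^{-k(T-u)}))}$. Then the leading contribution to $V^{(1)}$, namely $-\mu\rho \int_t^T \frac{Z^{(0,1)}_u(X^{(0)}_u(x))}{\sqrt{X^{(0)}_u(x)}}\, du$ evaluated along the deterministic zeroth-order flow, equals $-\frac{\rho\mu^3 c}{2\gamma k^2}\left\{\frac{1-Y_{tT}}{m X^{(0)}_T(x)} + \frac{1}{m^2}\ln\left(\frac{Y_{tT}x}{X^{(0)}_T(x)}\right)\right\}$. -/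

import Mathlib

/-!
By the flow property the second factor of the denominator of `Z⁰¹_u(X⁰_u)` is `X⁰_T`, so the
integrand is `-(μ²c/(2γk)) (1 - e^{-k(T-u)}) / (X⁰_u X⁰_T)`. As
`X⁰_T - e^{-k(T-u)} X⁰_u = m (1 - e^{-k(T-u)})`, this is a multiple of
`1/(m X⁰_u) - e^{-k(T-u)}/(m X⁰_T)`; the first term has antiderivative `(u + log X⁰_u / k) / m`
because `X⁰' = -k (X⁰ - m)`, the second is an exponential.
-/

open Real

lemma hasDerivAt_exp_neg_mul_sub_div {k : ℝ} (hk : k ≠ 0) (T u : ℝ) :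
    HasDerivAt (fun u => exp (-k * (T - u)) / k) (exp (-k * (T - u))) u := by
  have hlin : HasDerivAt (fun u : ℝ => -k * (T - u)) k u := by
    simpa using ((hasDerivAt_id u).const_sub T).const_mul (-k)
  exact (hlin.exp.div_const k).congr_deriv (by field_simp)

noncomputable def meanReversionFlow (k m x t u : ℝ) : ℝ :=
  exp (-k * (u - t)) * x + m * (1 - exp (-k * (u - t)))

namespace meanReversionFlow

variable {k m x t : ℝ}

@[simp]
lemma apply_self : meanReversionFlow k m x t t = x := by
  simp [meanReversionFlow]

lemma flow_flow (u T : ℝ) :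
    meanReversionFlow k m (meanReversionFlow k m x t u) u T = meanReversionFlow k m x t T := by
  have hexp : exp (-k * (T - u)) * exp (-k * (u - t)) = exp (-k * (T - t)) := by
    rw [← exp_add]; ring_nf
  simp only [meanReversionFlow]
  linear_combination (x - m) * hexp

lemma pos (hk : 0 ≤ k) (hm : 0 < m) (hx : 0 < x) {u : ℝ} (hu : t ≤ u) :
    0 < meanReversionFlow k m x t u := by
  have hle : exp (-k * (u - t)) ≤ 1 := exp_le_one_iff.2 (by nlinarith)
  have hpos := exp_pos (-k * (u - t))
  unfold meanReversionFlow
  nlinarith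

lemma continuous : Continuous (meanReversionFlow k m x t) := by
  unfold meanReversionFlow; fun_prop

lemma hasDerivAt (u : ℝ) :
    HasDerivAt (meanReversionFlow k m x t) (-k * (meanReversionFlow k m x t u - m)) u := by
  have hlin : HasDerivAt (fun u : ℝ => -k * (u - t)) (-k) u := by
    simpa using ((hasDerivAt_id u).sub_const t).const_mul (-k)
  have h := (hlin.exp.mul_const x).add ((hlin.exp.const_sub 1).const_mul m)
  exact h.congr_deriv (by unfold meanReversionFlow; ring)

lemma hasDerivAt_antideriv_inv (hk : k ≠ 0) (hm : m ≠ 0) {u : ℝ}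
    (hX : meanReversionFlow k m x t u ≠ 0) :
    HasDerivAt (fun u => (u + log (meanReversionFlow k m x t u) / k) / m)
      (meanReversionFlow k m x t u)⁻¹ u := by
  have h := ((hasDerivAt_id u).add (((hasDerivAt u).log hX).div_const k)).div_const m
  refine h.congr_deriv ?_
  field_simp
  ring

lemma integral_one_sub_exp_div (hk : 0 < k) (hm : 0 < m) (hx : 0 < x) {T : ℝ} (htT : t ≤ T) :
    ∫ u in t..T, (1 - exp (-k * (T - u))) /
        (meanReversionFlow k m x t u * meanReversionFlow k m x t T)
      = -(((1 - exp (-k * (T - t))) / (m * meanReversionFlow k m x t T)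
          + 1 / m ^ 2 * log (exp (-k * (T - t)) * x / meanReversionFlow k m x t T)) / k) := by
  set X := meanReversionFlow k m x t
  have hXpos : ∀ u ∈ Set.uIcc t T, 0 < X u := fun u hu =>
    pos hk.le hm hx (Set.uIcc_of_le htT ▸ hu).1
  have hXT : 0 < X T := hXpos T Set.right_mem_uIcc
  have hsplit : Set.EqOn (fun u => (1 - exp (-k * (T - u))) / (X u * X T))
      (fun u => (X u)⁻¹ / m - exp (-k * (T - u)) / (m * X T)) (Set.uIcc t T) := by
    intro u hu
    have hflow : exp (-k * (T - u)) * X u + m * (1 - exp (-k * (T - u))) = X T :=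
      flow_flow u T
    have hXu := (hXpos u hu).ne'
    simp only [neg_mul] at hflow ⊢
    field_simp
    linear_combination hflow
  have hderiv : ∀ u ∈ Set.uIcc t T, HasDerivAt
      (fun u => (u + log (X u) / k) / m / m - exp (-k * (T - u)) / k / (m * X T))
      ((X u)⁻¹ / m - exp (-k * (T - u)) / (m * X T)) u := fun u hu =>
    ((hasDerivAt_antideriv_inv hk.ne' hm.ne' (hXpos u hu).ne').div_const m).sub
      ((hasDerivAt_exp_neg_mul_sub_div hk.ne' T u).div_const (m * X T))
  have hcont : ContinuousOn (fun u => (X u)⁻¹ / m - exp (-k * (T - u)) / (m * X T))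
      (Set.uIcc t T) :=
    (((continuous.continuousOn.inv₀ fun u hu => (hXpos u hu).ne').div_const m).sub
      (Continuous.continuousOn (by fun_prop)))
  rw [intervalIntegral.integral_congr hsplit,
    intervalIntegral.integral_eq_sub_of_hasDerivAt hderiv hcont.intervalIntegrable,
    log_div (by positivity) hXT.ne', log_mul (exp_pos _).ne' hx.ne', log_exp]
  simp only [X, apply_self, sub_self, mul_zero, exp_zero]
  field_simp
  ring

end meanReversionFlow

open meanReversionFlow in
theorem stmt_18_general (μ ρ γ k m c x t T : ℝ) (hk : 0 < k) (hm : 0 < m)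
    (hx : 0 < x) (htT : t < T)
    (X0 : ℝ → ℝ)
    (hX0 : ∀ u, X0 u = Real.exp (-k * (u - t)) * x + m * (1 - Real.exp (-k * (u - t))))
    (Z01 : ℝ → ℝ → ℝ)
    (hZ01 : ∀ u x', Z01 u x' = -(μ ^ 2 * c / (2 * γ * k)) *
        ((1 - Real.exp (-k * (T - u))) /
          (Real.sqrt x' *
            (Real.exp (-k * (T - u)) * x' + m * (1 - Real.exp (-k * (T - u))))))) :
    -(μ * ρ) * (∫ u in t..T, Z01 u (X0 u) / Real.sqrt (X0 u))
      = -(ρ * μ ^ 3 * c / (2 * γ * k ^ 2)) *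
          ((1 - Real.exp (-k * (T - t))) / (m * X0 T)
            + 1 / m ^ 2 * Real.log (Real.exp (-k * (T - t)) * x / X0 T)) := by
  obtain rfl : X0 = meanReversionFlow k m x t := funext hX0
  set X := meanReversionFlow k m x t
  have hintegrand : Set.EqOn (fun u => Z01 u (X u) / sqrt (X u))
      (fun u => -(μ ^ 2 * c / (2 * γ * k)) * ((1 - exp (-k * (T - u))) / (X u * X T)))
      (Set.uIcc t T) := by
    intro u hu
    have hXu : 0 < X u := pos hk.le hm hx (Set.uIcc_of_le htT.le ▸ hu).1
    have hflow : exp (-k * (T - u)) * X u + m * (1 - exp (-k * (T - u))) = X T :=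
      flow_flow u T
    dsimp only
    rw [hZ01, hflow, mul_div_assoc, div_div, mul_right_comm (√(X u)),
      mul_self_sqrt hXu.le]
  rw [intervalIntegral.integral_congr hintegrand, intervalIntegral.integral_const_mul,
    integral_one_sub_exp_div hk hm hx htT.le]
  field_simp
  ring

/-- The leading contribution to `V^{(1)}`: with
`Z^{(0,1)}_u(x') = -(μ²c/(2γk)) (1-e^{-k(T-u)}) / (√x' (e^{-k(T-u)}x' + m(1-e^{-k(T-u)})))`,
the deterministic integral `-μρ ∫ₜ^T Z^{(0,1)}_u(X⁰_u(x)) / √(X⁰_u(x)) du` along the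
zeroth-order flow `X⁰_u(x) = Y_{tu}x + m(1-Y_{tu})` equals
`-(ρμ³c/(2γk²)) { (1-Y_{tT})/(m X⁰_T(x)) + (1/m²) log (Y_{tT}x / X⁰_T(x)) }`. -/
theorem stmt_18 (μ ρ γ k m c x t T : ℝ) (hγ : 0 < γ) (hk : 0 < k) (hm : 0 < m) (hc : 0 < c)
    (hx : 0 < x) (hρ : ρ ∈ Set.Ioo (-1 : ℝ) 1) (htT : t < T)
    (X0 : ℝ → ℝ)
    (hX0 : ∀ u, X0 u = Real.exp (-k * (u - t)) * x + m * (1 - Real.exp (-k * (u - t))))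
    (Z01 : ℝ → ℝ → ℝ)
    (hZ01 : ∀ u x', Z01 u x' = -(μ ^ 2 * c / (2 * γ * k)) *
        ((1 - Real.exp (-k * (T - u))) /
          (Real.sqrt x' *
            (Real.exp (-k * (T - u)) * x' + m * (1 - Real.exp (-k * (T - u))))))) :
    -(μ * ρ) * (∫ u in t..T, Z01 u (X0 u) / Real.sqrt (X0 u))
      = -(ρ * μ ^ 3 * c / (2 * γ * k ^ 2)) *
          ((1 - Real.exp (-k * (T - t))) / (m * X0 T)
            + 1 / m ^ 2 * Real.log (Real.exp (-k * (T - t)) * x / X0 T)) :=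
  stmt_18_general μ ρ γ k m c x t T hk hm hx htT X0 hX0 Z01 hZ01
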